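/- arXiv:2601.22854 — 2 statements merged into one kernel-verified Lean document; each statement's English description precedes it below -/
import Mathlib

section
/- The function Ψ_c(φ), defined as φ⁴ + 1 for φ ∈ (-β, β) and 2β²φ² - (β⁴ - 1) otherwise (with β > 1), is convex on ℝ. -/
/-!
Write `Ψ_c(φ) = h(φ²) + 1`, where `h` is `t ↦ t²` continued past `β²` by its tangent line.
Then `h` is differentiable with derivative `2 min(t, β²)`, which is nondecreasing, so `h` is
convex; on `[0, ∞)` that derivative is nonnegative, so `h` is nondecreasing there. A convex
function that is nondecreasing on the range of the convex function `φ ↦ φ²` stays convex when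
composed with it.
-/

open Set Filter

theorem HasDerivAt.of_eqOn_Iic_of_eqOn_Ici {f p q : ℝ → ℝ} {a d : ℝ}
    (hp : HasDerivAt p d a) (hq : HasDerivAt q d a)
    (hfp : EqOn f p (Iic a)) (hfq : EqOn f q (Ici a)) : HasDerivAt f d a := by
  have h := (hp.hasDerivWithinAt.congr hfp (hfp self_mem_Iic)).union
    (hq.hasDerivWithinAt.congr hfq (hfq self_mem_Ici))
  rwa [Iic_union_Ici, hasDerivWithinAt_univ] at h

theorem Real.range_sq : range (fun x : ℝ => x ^ 2) = Ici 0 :=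
  Subset.antisymm (range_subset_iff.2 fun x => sq_nonneg x) fun y hy => ⟨√y, Real.sq_sqrt hy⟩

noncomputable def sqThenTangent (b t : ℝ) : ℝ :=
  if t < b then t ^ 2 else 2 * b * t - b ^ 2

theorem eqOn_sqThenTangent_Iic (b : ℝ) : EqOn (sqThenTangent b) (· ^ 2) (Iic b) := by
  intro t ht
  rcases (mem_Iic.1 ht).lt_or_eq with ht | rfl
  · simp [sqThenTangent, ht]
  · simp only [sqThenTangent, lt_irrefl, if_false]
    ring

theorem eqOn_sqThenTangent_Ici (b : ℝ) :
    EqOn (sqThenTangent b) (fun t => 2 * b * t - b ^ 2) (Ici b) := fun t ht => by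
  simp [sqThenTangent, not_lt.2 (mem_Ici.1 ht)]

theorem hasDerivAt_sqThenTangent (b t : ℝ) :
    HasDerivAt (sqThenTangent b) (2 * min t b) t := by
  have hsq : ∀ x, HasDerivAt (fun y : ℝ => y ^ 2) (2 * x) x := fun x => by
    simpa using hasDerivAt_pow 2 x
  have hlin : ∀ x, HasDerivAt (fun y : ℝ => 2 * b * y - b ^ 2) (2 * b) x := fun x => by
    simpa using ((hasDerivAt_id x).const_mul (2 * b)).sub_const (b ^ 2)
  rcases lt_trichotomy t b with h | rfl | h
  · rw [min_eq_left h.le]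
    exact (hsq t).congr_of_eventuallyEq <| eventually_of_mem (Iio_mem_nhds h)
      fun y hy => eqOn_sqThenTangent_Iic b (mem_Iic.2 (le_of_lt hy))
  · rw [min_self]
    exact (hsq t).of_eqOn_Iic_of_eqOn_Ici (hlin t)
      (eqOn_sqThenTangent_Iic t) (eqOn_sqThenTangent_Ici t)
  · rw [min_eq_right h.le]
    exact (hlin t).congr_of_eventuallyEq <| eventually_of_mem (Ioi_mem_nhds h)
      fun y hy => eqOn_sqThenTangent_Ici b (mem_Ici.2 (le_of_lt hy))

theorem differentiable_sqThenTangent (b : ℝ) : Differentiable ℝ (sqThenTangent b) :=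
  fun t => (hasDerivAt_sqThenTangent b t).differentiableAt

theorem deriv_sqThenTangent (b : ℝ) : deriv (sqThenTangent b) = fun t => 2 * min t b :=
  funext fun t => (hasDerivAt_sqThenTangent b t).deriv

theorem convexOn_sqThenTangent (b : ℝ) : ConvexOn ℝ univ (sqThenTangent b) := by
  refine Monotone.convexOn_univ_of_deriv (differentiable_sqThenTangent b) ?_
  rw [deriv_sqThenTangent]
  exact fun s t hst => mul_le_mul_of_nonneg_left (min_le_min_right b hst) zero_le_two

theorem monotoneOn_sqThenTangent {b : ℝ} (hb : 0 ≤ b) :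
    MonotoneOn (sqThenTangent b) (Ici 0) := by
  refine monotoneOn_of_deriv_nonneg (convex_Ici 0)
    (differentiable_sqThenTangent b).continuous.continuousOn
    (differentiable_sqThenTangent b).differentiableOn fun t ht => ?_
  rw [interior_Ici] at ht
  rw [deriv_sqThenTangent]
  exact mul_nonneg zero_le_two (le_min (le_of_lt ht) hb)

theorem convexOn_sqThenTangent_sq {b : ℝ} (hb : 0 ≤ b) :
    ConvexOn ℝ univ (fun x : ℝ => sqThenTangent b (x ^ 2)) := by
  have himage : (fun x : ℝ => x ^ 2) '' univ = Ici 0 := by rw [image_univ, Real.range_sq]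
  show ConvexOn ℝ univ (sqThenTangent b ∘ fun x : ℝ => x ^ 2)
  refine ConvexOn.comp ?_ even_two.convexOn_pow ?_ <;> rw [himage]
  · exact (convexOn_sqThenTangent b).subset (subset_univ _) (convex_Ici 0)
  · exact monotoneOn_sqThenTangent hb

theorem stmt_1 (β : ℝ) (hβ : 1 < β) (Ψc : ℝ → ℝ)
    (hΨc : ∀ φ : ℝ, Ψc φ = if |φ| < β then φ^4 + 1 else 2*β^2*φ^2 - (β^4 - 1)) :
    ConvexOn ℝ Set.univ Ψc := by
  have hβ0 : 0 < β := by linarith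
  have hΨ : Ψc = fun φ => sqThenTangent (β ^ 2) (φ ^ 2) + 1 := by
    funext φ
    simp only [hΨc, sqThenTangent, sq_lt_sq, abs_of_pos hβ0]
    split_ifs <;> ring
  rw [hΨ]
  exact (convexOn_sqThenTangent_sq (sq_nonneg β)).add_const 1
end

section
/- Abstract energy dissipation: let H(x) = D(x) + E(x) - L(x) where D(x) ≥ 0 with D(x₀) = 0, E = E_c - E_e with E_e convex differentiable and L(x) = ⟨E_e'(x₀), x⟩ (Gâteaux derivative at x₀). If x* minimizes H over a set containing x₀, then E(x*) ≤ E(x₀). -/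
open AffineMap

theorem ConvexOn.le_sub_of_hasFDerivAt {E : Type*} [NormedAddCommGroup E] [NormedSpace ℝ E]
    {s : Set E} {f : E → ℝ} {f' : E →L[ℝ] ℝ} {x y : E} (hf : ConvexOn ℝ s f)
    (hx : x ∈ s) (hy : y ∈ s) (hf' : HasFDerivAt f f' x) :
    f' (y - x) ≤ f y - f x := by
  let γ : ℝ →ᵃ[ℝ] E := lineMap x y
  have hseg : ConvexOn ℝ (γ ⁻¹' s) (f ∘ γ) := hf.comp_affineMap γ
  have hderiv : HasDerivAt (f ∘ γ) (f' (y - x)) 0 :=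
    hf'.comp_hasDerivAt_of_eq 0 hasDerivAt_lineMap (lineMap_apply_zero x y).symm
  simpa [γ, slope_def_field] using
    hseg.le_slope_of_hasDerivAt (by simpa [γ] using hx) (by simpa [γ] using hy) one_pos hderiv

theorem stmt_7_general {X : Type*} [NormedAddCommGroup X] [NormedSpace ℝ X]
    (S : Set X) (x₀ : X) (hx₀ : x₀ ∈ S)
    (D Ec Ee : X → ℝ)
    (hD : ∀ x, 0 ≤ D x) (hD0 : D x₀ = 0)
    (hEe : ConvexOn ℝ Set.univ Ee)
    (L : X →L[ℝ] ℝ) (hL : HasFDerivAt Ee L x₀)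
    (xs : X)
    (hmin : ∀ x ∈ S, D xs + Ec xs - L xs ≤ D x + Ec x - L x) :
    Ec xs - Ee xs ≤ Ec x₀ - Ee x₀ := by
  have htangent : L xs - L x₀ ≤ Ee xs - Ee x₀ := by
    simpa using hEe.le_sub_of_hasFDerivAt (Set.mem_univ x₀) (Set.mem_univ xs) hL
  linarith [hmin x₀ hx₀, hD xs]

theorem stmt_7 {X : Type*} [NormedAddCommGroup X] [NormedSpace ℝ X]
    (S : Set X) (x₀ : X) (hx₀ : x₀ ∈ S)
    (D Ec Ee : X → ℝ)
    (hD : ∀ x, 0 ≤ D x) (hD0 : D x₀ = 0)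
    (hEe : ConvexOn ℝ Set.univ Ee)
    (L : X →L[ℝ] ℝ) (hL : HasFDerivAt Ee L x₀)
    (xs : X) (hxs : xs ∈ S)
    (hmin : ∀ x ∈ S, D xs + Ec xs - L xs ≤ D x + Ec x - L x) :
    Ec xs - Ee xs ≤ Ec x₀ - Ee x₀ :=
  stmt_7_general S x₀ hx₀ D Ec Ee hD hD0 hEe L hL xs hmin
end
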